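/- arXiv:math/9807003 — 4 statements merged into one kernel-verified Lean document; each statement's English description precedes it below -/
import Mathlib

section
/- Let k be a field, V a k-vector space, and R a k-linear endomorphism of V⊗V. Then R is a solution of the Hopf equation (R¹²R²³ = R²³R¹³R¹²) if and only if T := R∘τ satisfies the equation T²³T¹²T²³ = T¹²T¹³τ²³ in End(V⊗V⊗V), where τ : V⊗V → V⊗V is the flip map, τ²³ = I⊗τ, and T¹³ = (I⊗τ)(T⊗I)(I⊗τ). -/
open TensorProduct LinearMap

section HopfEq

variable (k V : Type*) [Field k] [AddCommGroup V] [Module k V]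

/-- The flip map `τ : V ⊗ V → V ⊗ V`, `τ(v ⊗ w) = w ⊗ v`. -/
noncomputable def flipMap : V ⊗[k] V →ₗ[k] V ⊗[k] V :=
  (TensorProduct.comm k V V).toLinearMap

variable {k V}

/-- `R¹² = R ⊗ I` as an endomorphism of `V ⊗ V ⊗ V`. -/
noncomputable def map12 (R : V ⊗[k] V →ₗ[k] V ⊗[k] V) :
    V ⊗[k] (V ⊗[k] V) →ₗ[k] V ⊗[k] (V ⊗[k] V) :=
  (TensorProduct.assoc k V V V).toLinearMap ∘ₗ R.rTensor V ∘ₗ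
    (TensorProduct.assoc k V V V).symm.toLinearMap

/-- `R²³ = I ⊗ R` as an endomorphism of `V ⊗ V ⊗ V`. -/
noncomputable def map23 (R : V ⊗[k] V →ₗ[k] V ⊗[k] V) :
    V ⊗[k] (V ⊗[k] V) →ₗ[k] V ⊗[k] (V ⊗[k] V) :=
  R.lTensor V

/-- `R¹³ = (I ⊗ τ)(R ⊗ I)(I ⊗ τ)` as an endomorphism of `V ⊗ V ⊗ V`. -/
noncomputable def map13 (R : V ⊗[k] V →ₗ[k] V ⊗[k] V) :
    V ⊗[k] (V ⊗[k] V) →ₗ[k] V ⊗[k] (V ⊗[k] V) :=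
  (flipMap k V).lTensor V ∘ₗ map12 R ∘ₗ (flipMap k V).lTensor V

/-- `R` is a solution of the Hopf equation: `R¹²R²³ = R²³R¹³R¹²`. -/
def IsHopfSolution (R : V ⊗[k] V →ₗ[k] V ⊗[k] V) : Prop :=
  map12 R ∘ₗ map23 R = map23 R ∘ₗ map13 R ∘ₗ map12 R

/-- `R` is a solution of the pentagonal equation: `R¹²R¹³R²³ = R²³R¹²`. -/
def IsPentagonSolution (R : V ⊗[k] V →ₗ[k] V ⊗[k] V) : Prop :=
  map12 R ∘ₗ map13 R ∘ₗ map23 R = map23 R ∘ₗ map12 R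

end HopfEq

/-!
Write `p = τ¹²`, `q = τ²³`, `a = R¹²`, `b = R²³` in the monoid `End(V ⊗ V ⊗ V)`. The flips are
involutions satisfying the braid relation `pqp = qpq`, and `R²³` is the conjugate of `R¹²` by the
cyclic permutation `pq`, i.e. `b = pq·a·qp`. Since `T¹² = ap`, `T²³ = bq` and `T¹³ = q·ap·q`,
these relations give `T²³T¹²T²³ = R²³R¹³R¹²·τ¹³` and `T¹²T¹³τ²³ = R¹²R²³·τ¹³` with `τ¹³ = qpq`
invertible, and cancelling `τ¹³` leaves the Hopf equation.
-/

theorem hopf_relation_iff_of_braid {M : Type*} [Monoid M] {a b p q : M} (hp : p * p = 1)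
    (hq : q * q = 1) (hpq : p * q * p = q * p * q) (hb : b = p * q * a * q * p) :
    a * b = b * (q * a * q) * a ↔ b * q * (a * p) * (b * q) = a * p * (q * (a * p) * q) * q := by
  have hp' (x : M) : p * (p * x) = x := by rw [← mul_assoc, hp, one_mul]
  have hq' (x : M) : q * (q * x) = x := by rw [← mul_assoc, hq, one_mul]
  have hqpq (x : M) : q * (p * (q * x)) = p * (q * (p * x)) := by simp only [← mul_assoc, hpq]
  have hw : q * p * q * (q * p * q) = 1 := by simp only [mul_assoc, hp', hq', hq]
  have hL : b * q * (a * p) * (b * q) = b * (q * a * q) * a * (q * p * q) := by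
    simp only [hb, mul_assoc, hp']
  have hR : a * p * (q * (a * p) * q) * q = a * b * (q * p * q) := by
    simp only [hb, mul_assoc, hp', hqpq]
  rw [hL, hR, IsUnit.mul_left_inj ⟨⟨_, _, hw, hw⟩, rfl⟩, eq_comm]

section FlipRelations

variable {k V : Type*} [Field k] [AddCommGroup V] [Module k V]

lemma map12_comp (R S : V ⊗[k] V →ₗ[k] V ⊗[k] V) : map12 (R ∘ₗ S) = map12 R ∘ₗ map12 S := by
  ext x y z
  simp [map12]

lemma map23_comp (R S : V ⊗[k] V →ₗ[k] V ⊗[k] V) : map23 (R ∘ₗ S) = map23 R ∘ₗ map23 S :=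
  lTensor_comp V R S

lemma map12_flipMap_comp_self : map12 (flipMap k V) ∘ₗ map12 (flipMap k V) = LinearMap.id := by
  ext x y z; simp [map12, flipMap]

lemma map23_flipMap_comp_self : map23 (flipMap k V) ∘ₗ map23 (flipMap k V) = LinearMap.id := by
  ext x y z; simp [map23, flipMap]

lemma flipMap_braid : map12 (flipMap k V) ∘ₗ map23 (flipMap k V) ∘ₗ map12 (flipMap k V)
    = map23 (flipMap k V) ∘ₗ map12 (flipMap k V) ∘ₗ map23 (flipMap k V) := by
  ext x y z; simp [map12, map23, flipMap]

lemma map23_eq_conj_map12 (R : V ⊗[k] V →ₗ[k] V ⊗[k] V) :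
    map23 R = map12 (flipMap k V) ∘ₗ map23 (flipMap k V) ∘ₗ map12 R ∘ₗ
      map23 (flipMap k V) ∘ₗ map12 (flipMap k V) := by
  ext x y z
  simp only [map23, AlgebraTensorModule.curry_apply, restrictScalars_self, curry_apply,
    lTensor_tmul, map12, flipMap, coe_comp, LinearEquiv.coe_coe, Function.comp_apply,
    assoc_symm_tmul, rTensor_tmul, comm_tmul, assoc_tmul]
  induction R (y ⊗ₜ z) using TensorProduct.induction_on with
  | zero => simp
  | tmul u v => simp
  | add s t hs ht => simp only [map_add, tmul_add, add_tmul, hs, ht]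

end FlipRelations

/-- `R` satisfies the Hopf equation iff `T := R∘τ` satisfies
`T²³T¹²T²³ = T¹²T¹³τ²³`. -/
theorem hopf_iff_comp_flip_eq (k V : Type*) [Field k] [AddCommGroup V] [Module k V]
    (R : V ⊗[k] V →ₗ[k] V ⊗[k] V) :
    IsHopfSolution R ↔
      map23 (R ∘ₗ flipMap k V) ∘ₗ map12 (R ∘ₗ flipMap k V) ∘ₗ map23 (R ∘ₗ flipMap k V)
        = map12 (R ∘ₗ flipMap k V) ∘ₗ map13 (R ∘ₗ flipMap k V) ∘ₗ map23 (flipMap k V) := by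
  have key := hopf_relation_iff_of_braid (a := map12 R) (b := map23 R)
    map12_flipMap_comp_self map23_flipMap_comp_self flipMap_braid (map23_eq_conj_map12 R)
  rw [IsHopfSolution, map13, map13, map12_comp, map23_comp]
  simp only [← Module.End.mul_eq_comp, mul_assoc] at key ⊢
  exact key
end

section
/- Let k be a field, V a k-vector space, and f ∈ End_k(V). Then R := f⊗I ∈ End_k(V⊗V) is a solution of the Hopf equation (R¹²R²³ = R²³R¹³R¹²) if and only if f² = f; likewise, R' := I⊗f is a solution of the Hopf equation if and only if f² = f. -/
/-!
For `R = f ⊗ g` each of `R¹²`, `R²³`, `R¹³` is again a triple tensor product of maps, so the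
Hopf equation reads `f ⊗ gf ⊗ g = f² ⊗ fg ⊗ g²`. Over a field `a ⊗ c = b ⊗ c` with `c ≠ 0`
forces `a = b` (a nonzero pure tensor is detected by a pair of functionals), so for `g = id`
(resp. `f = id`) the equation collapses to `f = f²` unless `f = 0`, where both sides hold.
-/

open TensorProduct LinearMap

namespace TensorProduct

section VectorSpace

variable {K M N P Q : Type*} [Field K] [AddCommGroup M] [Module K M] [AddCommGroup N] [Module K N]
  [AddCommGroup P] [Module K P] [AddCommGroup Q] [Module K Q]

theorem tmul_eq_zero_iff {x : M} {y : N} : x ⊗ₜ[K] y = 0 ↔ x = 0 ∨ y = 0 := by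
  refine ⟨fun h => ?_, by rintro (rfl | rfl) <;> simp⟩
  by_contra! hxy
  obtain ⟨φ, hφ⟩ := Module.Projective.exists_dual_eq_one K hxy.1
  obtain ⟨ψ, hψ⟩ := Module.Projective.exists_dual_eq_one K hxy.2
  have := congrArg (fun t => TensorProduct.lid K K (map φ ψ t)) h
  simp [hφ, hψ] at this

theorem tmul_left_inj {x x' : M} {y : N} (hy : y ≠ 0) : x ⊗ₜ[K] y = x' ⊗ₜ[K] y ↔ x = x' := by
  rw [← sub_eq_zero, ← sub_tmul, tmul_eq_zero_iff, sub_eq_zero, or_iff_left hy]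

theorem tmul_right_inj {x : M} {y y' : N} (hx : x ≠ 0) : x ⊗ₜ[K] y = x ⊗ₜ[K] y' ↔ y = y' := by
  rw [← sub_eq_zero, ← tmul_sub, tmul_eq_zero_iff, sub_eq_zero, or_iff_right hx]

theorem map_left_inj {f f' : M →ₗ[K] P} {g : N →ₗ[K] Q} (hg : g ≠ 0) :
    map f g = map f' g ↔ f = f' := by
  refine ⟨fun h => ?_, fun h => h ▸ rfl⟩
  obtain ⟨y, hy⟩ := DFunLike.ne_iff.mp hg
  ext x
  simpa [tmul_left_inj hy] using congrArg (· (x ⊗ₜ y)) h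

theorem map_right_inj {f : M →ₗ[K] P} {g g' : N →ₗ[K] Q} (hf : f ≠ 0) :
    map f g = map f g' ↔ g = g' := by
  refine ⟨fun h => ?_, fun h => h ▸ rfl⟩
  obtain ⟨x, hx⟩ := DFunLike.ne_iff.mp hf
  ext y
  simpa [tmul_right_inj hx] using congrArg (· (x ⊗ₜ y)) h

theorem map_ne_zero {f : M →ₗ[K] P} {g : N →ₗ[K] Q} (hf : f ≠ 0) (hg : g ≠ 0) : map f g ≠ 0 := by
  rw [← map_zero_left g, Ne, map_left_inj hg]
  exact hf

end VectorSpace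

end TensorProduct

section HopfEquation

variable {k V : Type*} [Field k] [AddCommGroup V] [Module k V]

theorem map12_map (f g : V →ₗ[k] V) : map12 (map f g) = map f (map g id) := by
  ext x y z
  simp [map12]

theorem map23_map (f g : V →ₗ[k] V) : map23 (map f g) = map id (map f g) :=
  rfl

theorem map13_map (f g : V →ₗ[k] V) : map13 (map f g) = map f (map id g) := by
  ext x y z
  simp [map13, map12, flipMap]

theorem isHopfSolution_map_iff (f g : V →ₗ[k] V) :
    IsHopfSolution (map f g) ↔
      map f (map (g ∘ₗ f) g) = map (f ∘ₗ f) (map (f ∘ₗ g) (g ∘ₗ g)) := by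
  simp only [IsHopfSolution, map12_map, map23_map, map13_map, ← map_comp, id_comp, comp_id]

end HopfEquation

/-- `f ⊗ I` (resp. `I ⊗ f`) is a solution of the Hopf equation iff
`f` is idempotent. -/
theorem tensor_id_isHopfSolution_iff_idempotent (k V : Type*) [Field k] [AddCommGroup V]
    [Module k V] (f : V →ₗ[k] V) :
    (IsHopfSolution (TensorProduct.map f (LinearMap.id : V →ₗ[k] V)) ↔ f ∘ₗ f = f) ∧
    (IsHopfSolution (TensorProduct.map (LinearMap.id : V →ₗ[k] V) f) ↔ f ∘ₗ f = f) := by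
  rcases eq_or_ne f 0 with rfl | hf
  · simp only [isHopfSolution_map_iff]
    simp
  have hid : (id : V →ₗ[k] V) ≠ 0 := fun h => hf (by rw [← f.id_comp, h, zero_comp])
  simp only [isHopfSolution_map_iff, id_comp, comp_id]
  rw [map_left_inj (map_ne_zero hf hid), map_right_inj hid, map_right_inj hf, eq_comm,
    and_self]
end

section
/- Let k be a field, V a k-vector space, and R a bijective k-linear endomorphism of V⊗V. Then R is a cocommutative solution of the Hopf equation (i.e. R¹²R²³ = R²³R¹³R¹² and R¹³R²³ = R²³R¹³) if and only if τ∘R⁻¹∘τ is a commutative solution of the Hopf equation (i.e. it satisfies the Hopf equation and its ¹² and ¹³ versions commute), where τ is the flip map. -/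
open TensorProduct LinearMap

/-!
Let `P` be the reversal `a ⊗ b ⊗ c ↦ c ⊗ b ⊗ a` of `V ⊗ V ⊗ V`. Conjugation by `P` exchanges the
legs `12` and `23`, fixes the leg `13`, and turns a leg of `f` into the corresponding reversed leg
of `τ ∘ f ∘ τ`. Hence `S = τ R⁻¹ τ` has legs `S¹² = P (R²³)⁻¹ P`, `S²³ = P (R¹²)⁻¹ P` and
`S¹³ = P (R¹³)⁻¹ P`. Inverting a relation between units reverses the order of its factors, so
`R¹²R²³ = R²³R¹³R¹²` becomes `S¹²S²³ = S²³S¹³S¹²`, and `R¹³R²³ = R²³R¹³` becomes `S¹²S¹³ = S¹³S¹²`.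
-/

theorem Units.commute_val_inv_iff {M : Type*} [Monoid M] (a b : Mˣ) :
    Commute (↑a⁻¹ : M) ↑b⁻¹ ↔ Commute (a : M) b :=
  Commute.units_inv_left_iff.trans Commute.units_inv_right_iff

theorem Units.hopf_relation_inv_iff {M : Type*} [Monoid M] (a b c : Mˣ) :
    (↑b⁻¹ * ↑a⁻¹ : M) = ↑a⁻¹ * (↑c⁻¹ * ↑b⁻¹) ↔ (a * b : M) = b * (c * a) := by
  simp only [← Units.val_mul, Units.val_inj, ← mul_inv_rev, inv_inj, mul_assoc]

section TensorLegs

variable {k V : Type*} [Field k] [AddCommGroup V] [Module k V]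

variable (k V) in
noncomputable def leg12 : Module.End k (V ⊗[k] V) →ₐ[k] Module.End k (V ⊗[k] (V ⊗[k] V)) :=
  ((TensorProduct.assoc k V V V).conjAlgEquiv k).toAlgHom.comp
    (Module.End.rTensorAlgHom k (V ⊗[k] V) V)

variable (k V) in
noncomputable def leg23 : Module.End k (V ⊗[k] V) →ₐ[k] Module.End k (V ⊗[k] (V ⊗[k] V)) :=
  Module.End.lTensorAlgHom k (V ⊗[k] V) V

variable (k V) in
noncomputable def leg13 : Module.End k (V ⊗[k] V) →ₐ[k] Module.End k (V ⊗[k] (V ⊗[k] V)) :=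
  (((TensorProduct.comm k V V).lTensor V).conjAlgEquiv k).toAlgHom.comp (leg12 k V)

@[simp]
theorem flipMap_tmul (a b : V) : flipMap k V (a ⊗ₜ b) = b ⊗ₜ a := rfl

@[simp]
theorem map12_tmul (f : Module.End k (V ⊗[k] V)) (a b c : V) :
    map12 f (a ⊗ₜ (b ⊗ₜ c)) = TensorProduct.assoc k V V V (f (a ⊗ₜ b) ⊗ₜ c) := rfl

@[simp]
theorem map23_tmul (f : Module.End k (V ⊗[k] V)) (a b c : V) :
    map23 f (a ⊗ₜ (b ⊗ₜ c)) = a ⊗ₜ f (b ⊗ₜ c) := rfl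

@[simp]
theorem map13_tmul (f : Module.End k (V ⊗[k] V)) (a b c : V) :
    map13 f (a ⊗ₜ (b ⊗ₜ c)) =
      (flipMap k V).lTensor V (TensorProduct.assoc k V V V (f (a ⊗ₜ c) ⊗ₜ b)) := rfl

variable (k V) in
noncomputable def tensorReverse : V ⊗[k] (V ⊗[k] V) ≃ₗ[k] V ⊗[k] (V ⊗[k] V) :=
  (TensorProduct.assoc k V V V).symm ≪≫ₗ TensorProduct.comm k (V ⊗[k] V) V ≪≫ₗ
    (TensorProduct.comm k V V).lTensor V

@[simp]
theorem tensorReverse_tmul (a b c : V) :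
    tensorReverse k V (a ⊗ₜ (b ⊗ₜ c)) = c ⊗ₜ (b ⊗ₜ a) := by
  simp [tensorReverse]

@[simp]
theorem tensorReverse_symm_tmul (a b c : V) :
    (tensorReverse k V).symm (a ⊗ₜ (b ⊗ₜ c)) = c ⊗ₜ (b ⊗ₜ a) := by
  simp [tensorReverse]

theorem tensorReverse_assoc_tmul (x : V ⊗[k] V) (c : V) :
    tensorReverse k V (TensorProduct.assoc k V V V (x ⊗ₜ c)) = c ⊗ₜ flipMap k V x := by
  induction x using TensorProduct.induction_on <;> simp_all [add_tmul, tmul_add]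

theorem tensorReverse_tmul_left (c : V) (x : V ⊗[k] V) :
    tensorReverse k V (c ⊗ₜ x) = TensorProduct.assoc k V V V (flipMap k V x ⊗ₜ c) := by
  induction x using TensorProduct.induction_on <;> simp_all [add_tmul, tmul_add]

theorem tensorReverse_lTensor_flip_assoc_tmul (x : V ⊗[k] V) (b : V) :
    tensorReverse k V ((flipMap k V).lTensor V (TensorProduct.assoc k V V V (x ⊗ₜ b))) =
      (flipMap k V).lTensor V (TensorProduct.assoc k V V V (flipMap k V x ⊗ₜ b)) := by
  induction x using TensorProduct.induction_on <;> simp_all [add_tmul]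

theorem map12_flip_conj (f : Module.End k (V ⊗[k] V)) :
    map12 (flipMap k V ∘ₗ f ∘ₗ flipMap k V) = (tensorReverse k V).conjAlgEquiv k (map23 f) := by
  refine TensorProduct.ext_threefold' fun a b c => ?_
  simp [tensorReverse_tmul_left]

theorem map23_flip_conj (f : Module.End k (V ⊗[k] V)) :
    map23 (flipMap k V ∘ₗ f ∘ₗ flipMap k V) = (tensorReverse k V).conjAlgEquiv k (map12 f) := by
  refine TensorProduct.ext_threefold' fun a b c => ?_
  simp [tensorReverse_assoc_tmul]

theorem map13_flip_conj (f : Module.End k (V ⊗[k] V)) :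
    map13 (flipMap k V ∘ₗ f ∘ₗ flipMap k V) = (tensorReverse k V).conjAlgEquiv k (map13 f) := by
  refine TensorProduct.ext_threefold' fun a b c => ?_
  simp [tensorReverse_lTensor_flip_assoc_tmul]

theorem isHopfSolution_flip_conj_symm_iff (R : V ⊗[k] V ≃ₗ[k] V ⊗[k] V) :
    IsHopfSolution (flipMap k V ∘ₗ R.symm.toLinearMap ∘ₗ flipMap k V) ↔
      IsHopfSolution R.toLinearMap := by
  let u := LinearMap.GeneralLinearGroup.ofLinearEquiv R
  rw [IsHopfSolution, map12_flip_conj, map23_flip_conj, map13_flip_conj]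
  simp only [← Module.End.mul_eq_comp, ← map_mul,
    ((tensorReverse k V).conjAlgEquiv k).injective.eq_iff]
  -- `Units.map (legᵢⱼ k V) u` has value `mapᵢⱼ R` and inverse `mapᵢⱼ R.symm` by definition.
  exact Units.hopf_relation_inv_iff (Units.map (leg12 k V).toMonoidHom u)
    (Units.map (leg23 k V).toMonoidHom u) (Units.map (leg13 k V).toMonoidHom u)

theorem commute_map12_map13_flip_conj_symm_iff (R : V ⊗[k] V ≃ₗ[k] V ⊗[k] V) :
    Commute (map12 (flipMap k V ∘ₗ R.symm.toLinearMap ∘ₗ flipMap k V))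
        (map13 (flipMap k V ∘ₗ R.symm.toLinearMap ∘ₗ flipMap k V)) ↔
      Commute (map13 R.toLinearMap) (map23 R.toLinearMap) := by
  let u := LinearMap.GeneralLinearGroup.ofLinearEquiv R
  rw [map12_flip_conj, map13_flip_conj, commute_map_iff (AlgEquiv.injective _), Commute.symm_iff]
  exact Units.commute_val_inv_iff (Units.map (leg13 k V).toMonoidHom u)
    (Units.map (leg23 k V).toMonoidHom u)

end TensorLegs

/-- a bijective `R` is a cocommutative solution of the Hopf equation iff
`τ∘R⁻¹∘τ` is a commutative solution of the Hopf equation. -/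
theorem cocommutative_hopf_iff_flip_inv_commutative (k V : Type*) [Field k] [AddCommGroup V]
    [Module k V] (R : V ⊗[k] V ≃ₗ[k] V ⊗[k] V) :
    (IsHopfSolution R.toLinearMap ∧
        map13 R.toLinearMap ∘ₗ map23 R.toLinearMap = map23 R.toLinearMap ∘ₗ map13 R.toLinearMap)
      ↔ (IsHopfSolution (flipMap k V ∘ₗ R.symm.toLinearMap ∘ₗ flipMap k V) ∧
          map12 (flipMap k V ∘ₗ R.symm.toLinearMap ∘ₗ flipMap k V) ∘ₗ
              map13 (flipMap k V ∘ₗ R.symm.toLinearMap ∘ₗ flipMap k V)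
            = map13 (flipMap k V ∘ₗ R.symm.toLinearMap ∘ₗ flipMap k V) ∘ₗ
              map12 (flipMap k V ∘ₗ R.symm.toLinearMap ∘ₗ flipMap k V)) :=
  and_congr (isHopfSolution_flip_conj_symm_iff R).symm
    (commute_map12_map13_flip_conj_symm_iff R).symm
end

section
/- Let k be a field, H a k-bialgebra, and (M,·,ρ) a left-right H-Hopf module: M is a left H-module (with k-linear action), a right H-comodule via a k-linear coassociative counital map ρ : M → M⊗H written ρ(m) = Σ m₍₀₎⊗m₍₁₎, and the compatibility ρ(h·m) = Σ h₍₁₎·m₍₀₎ ⊗ h₍₂₎m₍₁₎ holds for all h ∈ H, m ∈ M. Then the k-linear map R := R_{(M,·,ρ)} : M⊗M → M⊗M defined by R(m⊗n) = Σ n₍₁₎·m ⊗ n₍₀₎ is a solution of the Hopf equation (R¹²R²³ = R²³R¹³R¹²). -/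
/-!
Write `R(m ⊗ n) = Σ n₍₁₎·m ⊗ n₍₀₎` and `Φ(x ⊗ y, q ⊗ a ⊗ b) = b·x ⊗ a·y ⊗ q`. On `m ⊗ n ⊗ p`
both sides of the Hopf equation are `Φ(R(m ⊗ n), T)`: for `R¹²R²³` the compatibility
`ρ(h·n) = Σ h₍₁₎·n₍₀₎ ⊗ h₍₂₎n₍₁₎` gives `T = Σ p₍₀₎ ⊗ Δ(p₍₁₎)`, while for `R²³R¹³R¹²` a direct
computation gives `T = Σ p₍₀₎₍₀₎ ⊗ p₍₀₎₍₁₎ ⊗ p₍₁₎`. Coassociativity of `ρ` identifies the two.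
-/

open TensorProduct LinearMap

variable (k H M : Type*) [Field k] [Ring H] [Bialgebra k H] [AddCommGroup M] [Module k M]

/-- For a left action `μ : H ⊗ M → M` and a coaction `ρ : M → M ⊗ H`,
`ρ(m) = Σ m₍₀₎ ⊗ m₍₁₎`, the map `R : M ⊗ M → M ⊗ M`, `R(m ⊗ n) = Σ n₍₁₎·m ⊗ n₍₀₎`. -/
noncomputable def hopfModuleMap (μ : H ⊗[k] M →ₗ[k] M) (ρ : M →ₗ[k] M ⊗[k] H) :
    M ⊗[k] M →ₗ[k] M ⊗[k] M :=
  μ.rTensor M ∘ₗ ((TensorProduct.comm k M H).toLinearMap.rTensor M) ∘ₗ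
    (TensorProduct.assoc k M H M).symm.toLinearMap ∘ₗ
    ((TensorProduct.comm k M H).toLinearMap.lTensor M) ∘ₗ ρ.lTensor M

section LegMaps

variable {k V : Type*} [Field k] [AddCommGroup V] [Module k V] (R : V ⊗[k] V →ₗ[k] V ⊗[k] V)

lemma map12_tmul_s14 (x y z : V) :
    map12 R (x ⊗ₜ[k] (y ⊗ₜ[k] z)) = TensorProduct.assoc k V V V (R (x ⊗ₜ[k] y) ⊗ₜ[k] z) := by
  simp [map12]

lemma map23_tmul_s14 (x : V) (t : V ⊗[k] V) : map23 R (x ⊗ₜ[k] t) = x ⊗ₜ[k] R t := rfl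

lemma map13_tmul_s14 (x y z : V) :
    map13 R (x ⊗ₜ[k] (y ⊗ₜ[k] z)) =
      (flipMap k V).lTensor V (TensorProduct.assoc k V V V (R (x ⊗ₜ[k] z) ⊗ₜ[k] y)) := by
  simp [map13, map12_tmul_s14, flipMap]

end LegMaps

section HopfModule

variable {k H M}

noncomputable def actSwap (μ : H ⊗[k] M →ₗ[k] M) : M ⊗[k] (M ⊗[k] H) →ₗ[k] M ⊗[k] M :=
  μ.rTensor M ∘ₗ (TensorProduct.comm k M H).toLinearMap.rTensor M ∘ₗ
    (TensorProduct.assoc k M H M).symm.toLinearMap ∘ₗ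
    (TensorProduct.comm k M H).toLinearMap.lTensor M

@[simp]
lemma actSwap_tmul (μ : H ⊗[k] M →ₗ[k] M) (m n : M) (h : H) :
    actSwap μ (m ⊗ₜ[k] (n ⊗ₜ[k] h)) = μ (h ⊗ₜ[k] m) ⊗ₜ[k] n := by
  simp [actSwap]

lemma hopfModuleMap_tmul {μ : H ⊗[k] M →ₗ[k] M} {ρ : M →ₗ[k] M ⊗[k] H} (m n : M) :
    hopfModuleMap k H M μ ρ (m ⊗ₜ[k] n) = actSwap μ (m ⊗ₜ[k] ρ n) := rfl

noncomputable def twistAct (μ : H ⊗[k] M →ₗ[k] M) :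
    M ⊗[k] M →ₗ[k] M ⊗[k] (H ⊗[k] H) →ₗ[k] M ⊗[k] (M ⊗[k] M) :=
  TensorProduct.curry <|
    (TensorProduct.assoc k M M M).toLinearMap ∘ₗ
    (TensorProduct.comm k M (M ⊗[k] M)).toLinearMap ∘ₗ
    (TensorProduct.map μ μ ∘ₗ (TensorProduct.tensorTensorTensorComm k H H M M).toLinearMap ∘ₗ
      (TensorProduct.comm k H H).toLinearMap.rTensor (M ⊗[k] M)).lTensor M ∘ₗ
    (TensorProduct.assoc k M (H ⊗[k] H) (M ⊗[k] M)).toLinearMap ∘ₗ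
    (TensorProduct.comm k (M ⊗[k] M) (M ⊗[k] (H ⊗[k] H))).toLinearMap

@[simp]
lemma twistAct_tmul (μ : H ⊗[k] M →ₗ[k] M) (x y p : M) (a b : H) :
    twistAct μ (x ⊗ₜ[k] y) (p ⊗ₜ[k] (a ⊗ₜ[k] b)) =
      μ (b ⊗ₜ[k] x) ⊗ₜ[k] (μ (a ⊗ₜ[k] y) ⊗ₜ[k] p) := by
  simp [twistAct]

lemma map12_hopfModuleMap_act {μ : H ⊗[k] M →ₗ[k] M} {ρ : M →ₗ[k] M ⊗[k] H}
    (hμ_mul : ∀ (a b : H) (m : M), μ ((a * b) ⊗ₜ[k] m) = μ (a ⊗ₜ[k] μ (b ⊗ₜ[k] m)))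
    (hcompat : ρ ∘ₗ μ = TensorProduct.map μ (LinearMap.mul' k H) ∘ₗ
        (TensorProduct.tensorTensorTensorComm k H H M H).toLinearMap ∘ₗ
        TensorProduct.map (Coalgebra.comul (R := k)) ρ)
    (m n q : M) (h : H) :
    map12 (hopfModuleMap k H M μ ρ) (m ⊗ₜ[k] (μ (h ⊗ₜ[k] n) ⊗ₜ[k] q)) =
      twistAct μ (hopfModuleMap k H M μ ρ (m ⊗ₜ[k] n)) (q ⊗ₜ[k] Coalgebra.comul (R := k) h) := by
  have hρ_act : ρ (μ (h ⊗ₜ[k] n)) = TensorProduct.map μ (LinearMap.mul' k H)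
      (TensorProduct.tensorTensorTensorComm k H H M H (Coalgebra.comul (R := k) h ⊗ₜ[k] ρ n)) := by
    simpa using LinearMap.congr_fun hcompat (h ⊗ₜ[k] n)
  rw [map12_tmul_s14, hopfModuleMap_tmul, hopfModuleMap_tmul, hρ_act]
  generalize Coalgebra.comul (R := k) h = u
  generalize ρ n = s
  induction u using TensorProduct.induction_on with
  | zero => simp
  | tmul a b =>
    induction s using TensorProduct.induction_on with
    | zero => simp
    | tmul n₀ c => simp [hμ_mul]
    | add s₁ s₂ hs₁ hs₂ => simp only [tmul_add, add_tmul, map_add, LinearMap.add_apply, hs₁, hs₂]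
  | add u₁ u₂ hu₁ hu₂ => simp only [add_tmul, tmul_add, map_add, hu₁, hu₂]

lemma map12_comp_map23_hopfModuleMap_tmul {μ : H ⊗[k] M →ₗ[k] M} {ρ : M →ₗ[k] M ⊗[k] H}
    (hμ_mul : ∀ (a b : H) (m : M), μ ((a * b) ⊗ₜ[k] m) = μ (a ⊗ₜ[k] μ (b ⊗ₜ[k] m)))
    (hcompat : ρ ∘ₗ μ = TensorProduct.map μ (LinearMap.mul' k H) ∘ₗ
        (TensorProduct.tensorTensorTensorComm k H H M H).toLinearMap ∘ₗ
        TensorProduct.map (Coalgebra.comul (R := k)) ρ)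
    (m n p : M) :
    (map12 (hopfModuleMap k H M μ ρ) ∘ₗ map23 (hopfModuleMap k H M μ ρ)) (m ⊗ₜ[k] (n ⊗ₜ[k] p)) =
      twistAct μ (hopfModuleMap k H M μ ρ (m ⊗ₜ[k] n))
        ((Coalgebra.comul (R := k)).lTensor M (ρ p)) := by
  rw [comp_apply, map23_tmul_s14, hopfModuleMap_tmul n p]
  induction ρ p using TensorProduct.induction_on with
  | zero => simp
  | tmul q h => simp [map12_hopfModuleMap_act hμ_mul hcompat]
  | add t₁ t₂ ht₁ ht₂ => simp only [tmul_add, map_add, ht₁, ht₂]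

lemma map23_comp_map13_comp_map12_hopfModuleMap_tmul (μ : H ⊗[k] M →ₗ[k] M)
    (ρ : M →ₗ[k] M ⊗[k] H) (m n p : M) :
    (map23 (hopfModuleMap k H M μ ρ) ∘ₗ map13 (hopfModuleMap k H M μ ρ) ∘ₗ
        map12 (hopfModuleMap k H M μ ρ)) (m ⊗ₜ[k] (n ⊗ₜ[k] p)) =
      twistAct μ (hopfModuleMap k H M μ ρ (m ⊗ₜ[k] n))
        (TensorProduct.assoc k M H H (ρ.rTensor H (ρ p))) := by
  rw [comp_apply, comp_apply, map12_tmul_s14]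
  induction hopfModuleMap k H M μ ρ (m ⊗ₜ[k] n) using TensorProduct.induction_on with
  | zero => simp
  | tmul x y =>
    rw [TensorProduct.assoc_tmul, map13_tmul_s14, hopfModuleMap_tmul x p]
    induction ρ p using TensorProduct.induction_on with
    | zero => simp
    | tmul q h =>
      simp only [actSwap_tmul, TensorProduct.assoc_tmul, lTensor_tmul, flipMap,
        LinearEquiv.coe_coe, TensorProduct.comm_tmul, map23_tmul_s14, hopfModuleMap_tmul y q,
        rTensor_tmul]
      induction ρ q using TensorProduct.induction_on with
      | zero => simp
      | tmul q₀ a => simp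
      | add s₁ s₂ hs₁ hs₂ => simp only [tmul_add, add_tmul, map_add, hs₁, hs₂]
    | add t₁ t₂ ht₁ ht₂ => simp only [tmul_add, add_tmul, map_add, ht₁, ht₂]
  | add w₁ w₂ hw₁ hw₂ => simp only [add_tmul, map_add, LinearMap.add_apply, hw₁, hw₂]

end HopfModule

theorem hopfModuleMap_isHopfSolution (μ : H ⊗[k] M →ₗ[k] M) (ρ : M →ₗ[k] M ⊗[k] H)
    (hμ_mul : ∀ (a b : H) (m : M), μ ((a * b) ⊗ₜ[k] m) = μ (a ⊗ₜ[k] μ (b ⊗ₜ[k] m)))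
    (hρ_coassoc : (TensorProduct.assoc k M H H).toLinearMap ∘ₗ ρ.rTensor H ∘ₗ ρ
        = (Coalgebra.comul (R := k)).lTensor M ∘ₗ ρ)
    (hcompat : ρ ∘ₗ μ = TensorProduct.map μ (LinearMap.mul' k H) ∘ₗ
        (TensorProduct.tensorTensorTensorComm k H H M H).toLinearMap ∘ₗ
        TensorProduct.map (Coalgebra.comul (R := k)) ρ) :
    IsHopfSolution (hopfModuleMap k H M μ ρ) := by
  refine TensorProduct.ext_threefold' fun m n p => ?_
  rw [map12_comp_map23_hopfModuleMap_tmul hμ_mul hcompat,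
    map23_comp_map13_comp_map12_hopfModuleMap_tmul]
  exact congrArg _ (LinearMap.congr_fun hρ_coassoc p).symm
end
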